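/- In the multi-issue representation where v(S) = Σ_{i=1}^{t} v_i(S ∩ C_i) for subsets C_1, …, C_t ⊆ N and games v_i : 2^{C_i} → ℝ with v_i(∅) = 0, the Shapley value decomposes: φ_j(v) = Σ_{i : j ∈ C_i} φ_j^{C_i}(v_i), where φ_j^{C_i}(v_i) is the Shapley value of agent j in the cooperative game (C_i, v_i). -/

import Mathlib

open Finset

noncomputable def shapley {ι : Type*} [DecidableEq ι] (N : Finset ι) (v : Finset ι → ℝ) (i : ι) : ℝ :=
  ∑ S ∈ (N.erase i).powerset,
    ((Nat.factorial S.card * Nat.factorial (N.card - S.card - 1) : ℝ) / (Nat.factorial N.card : ℝ))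
      * (v (insert i S) - v S)

/-!
The Shapley value is linear in the game, so it suffices to treat each summand `S ↦ v i (S ∩ C i)`
separately. If `j ∉ C i`, then `j` is a null player of that game. If `j ∈ C i`, every player
`k ∈ N \ C i` is a dummy, and removing a dummy does not change the Shapley value: the coalitions
`T` and `insert k T` contribute the same marginal value, and their weights in the game on `n + 2`
players add up to the weight of `T` in the game on `n + 1` players.
-/

noncomputable def shapleyWeight (n s : ℕ) : ℝ :=
  (Nat.factorial s * Nat.factorial (n - s - 1) : ℝ) / (Nat.factorial n : ℝ)

theorem shapleyWeight_add_shapleyWeight_succ {n s : ℕ} (hs : s ≤ n) :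
    shapleyWeight (n + 2) s + shapleyWeight (n + 2) (s + 1) = shapleyWeight (n + 1) s := by
  obtain ⟨b, rfl⟩ := Nat.exists_eq_add_of_le hs
  have e1 : s + b + 2 - s - 1 = b + 1 := by omega
  have e2 : s + b + 2 - (s + 1) - 1 = b := by omega
  have e3 : s + b + 1 - s - 1 = b := by omega
  simp only [shapleyWeight, e1, e2, e3, Nat.factorial_succ, show s + b + 2 = (s + b + 1) + 1 from rfl]
  push_cast
  field_simp
  ring

section
variable {ι : Type*} [DecidableEq ι]

theorem shapley_eq_sum_shapleyWeight (N : Finset ι) (v : Finset ι → ℝ) (j : ι) :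
    shapley N v j = ∑ S ∈ (N.erase j).powerset, shapleyWeight N.card S.card * (v (insert j S) - v S) :=
  rfl

theorem shapley_sum {α : Type*} (s : Finset α) (N : Finset ι) (v : α → Finset ι → ℝ) (j : ι) :
    shapley N (fun S => ∑ a ∈ s, v a S) j = ∑ a ∈ s, shapley N (v a) j := by
  simp only [shapley_eq_sum_shapleyWeight, ← sum_sub_distrib, mul_sum]
  exact sum_comm

theorem shapley_eq_zero_of_null {N : Finset ι} {v : Finset ι → ℝ} {j : ι}
    (hj : ∀ S, v (insert j S) = v S) : shapley N v j = 0 :=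
  sum_eq_zero fun S _ => by rw [hj, sub_self, mul_zero]

theorem shapley_erase_of_dummy {N : Finset ι} {v : Finset ι → ℝ} {j k : ι}
    (hj : j ∈ N) (hk : k ∈ N) (hjk : j ≠ k) (hv : ∀ S, v (insert k S) = v S) :
    shapley N v j = shapley (N.erase k) v j := by
  set M := (N.erase j).erase k
  have hkM : k ∉ M := notMem_erase _ _
  have hNj : N.erase j = insert k M := (insert_erase (mem_erase.2 ⟨hjk.symm, hk⟩)).symm
  have hNk : (N.erase k).erase j = M := erase_right_comm
  have hcardN : N.card = M.card + 2 := by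
    rw [← card_erase_add_one hj, hNj, card_insert_of_notMem hkM]
  have hcardNk : (N.erase k).card = M.card + 1 := by
    rw [← card_erase_add_one (mem_erase.2 ⟨hjk, hj⟩), hNk]
  simp only [shapley_eq_sum_shapleyWeight]
  rw [hNj, sum_powerset_insert hkM, hNk, ← sum_add_distrib]
  refine sum_congr rfl fun T hT => ?_
  have hTM : T ⊆ M := mem_powerset.1 hT
  have hkT : k ∉ T := fun h => hkM (hTM h)
  rw [Finset.insert_comm, hv, hv, card_insert_of_notMem hkT, hcardN, hcardNk,
    ← shapleyWeight_add_shapleyWeight_succ (card_le_card hTM)]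
  ring

theorem shapley_inter_of_subset {C N : Finset ι} {j : ι} (u : Finset ι → ℝ) (hj : j ∈ C)
    (hCN : C ⊆ N) : shapley N (fun S => u (S ∩ C)) j = shapley C u j := by
  induction N using Finset.strongInduction with
  | H N ih =>
    rcases hCN.eq_or_ssubset with rfl | hss
    · refine sum_congr rfl fun S hS => ?_
      have hSC : S ⊆ C := (mem_powerset.1 hS).trans (erase_subset _ _)
      dsimp only
      rw [inter_eq_left.2 hSC, inter_eq_left.2 (insert_subset hj hSC)]
    · obtain ⟨k, hkN, hkC⟩ := exists_of_ssubset hss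
      rw [shapley_erase_of_dummy (hCN hj) hkN (ne_of_mem_of_not_mem hj hkC)
        fun S => by rw [insert_inter_of_notMem hkC]]
      exact ih _ (erase_ssubset hkN) (subset_erase.2 ⟨hCN, hkC⟩)

end

theorem multi_issue_shapley_decomposition_general {ι : Type*} [DecidableEq ι] (N : Finset ι)
    (t : ℕ) (C : Fin t → Finset ι) (hC : ∀ i, C i ⊆ N)
    (v : Fin t → Finset ι → ℝ)
    (j : ι) :
    shapley N (fun S => ∑ i : Fin t, v i (S ∩ C i)) j =
      ∑ i ∈ Finset.univ.filter (fun i : Fin t => j ∈ C i), shapley (C i) (v i) j := by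
  have hnull : ∀ i ∈ univ.filter (fun i : Fin t => j ∉ C i),
      shapley N (fun S => v i (S ∩ C i)) j = 0 := fun i hi =>
    shapley_eq_zero_of_null fun S => by rw [insert_inter_of_notMem (mem_filter.1 hi).2]
  rw [shapley_sum, ← sum_filter_add_sum_filter_not univ (fun i => j ∈ C i), sum_eq_zero hnull,
    add_zero]
  exact sum_congr rfl fun i hi => shapley_inter_of_subset (v i) (mem_filter.1 hi).2 (hC i)

theorem multi_issue_shapley_decomposition {ι : Type*} [DecidableEq ι] (N : Finset ι)
    (t : ℕ) (C : Fin t → Finset ι) (hC : ∀ i, C i ⊆ N)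
    (v : Fin t → Finset ι → ℝ) (hv0 : ∀ i, v i ∅ = 0)
    (j : ι) (hj : j ∈ N) :
    shapley N (fun S => ∑ i : Fin t, v i (S ∩ C i)) j =
      ∑ i ∈ Finset.univ.filter (fun i : Fin t => j ∈ C i), shapley (C i) (v i) j :=
  multi_issue_shapley_decomposition_general N t C hC v j
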